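/- arXiv:2305.18577 — 2 statements merged into one kernel-verified Lean document; each statement's English description precedes it below -/
import Mathlib

section
/- Suppose f : ℝ^n → ℝ is convex and differentiable with L-Lipschitz gradient, and {d_k} is a sequence of differentiable maps d_k : ℝ^{2n} → ℝ^n each with Jacobian Frobenius norm bounded by C. If the iterates x_{k+1} = x_k − d_k(x_k, ∇f(x_k)) converge to some minimizer x_* of f and d_k(x_*, 0) → 0 as k → ∞, then for each k there exist a matrix P_k ∈ ℝ^{n×n} and a vector b_k ∈ ℝ^n such that d_k(x_k, ∇f(x_k)) = P_k ∇f(x_k) + b_k, with ‖P_k‖ ≤ √n·C for all k and b_k → 0 as k → ∞. -/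
open scoped BigOperators Topology

/-- Frobenius norm of the Jacobian of a map `d : ℝ^n × ℝ^n → ℝ^n`, the two
blocks of inputs being indexed by `Fin 2`. -/
noncomputable def jacFrobNorm2 {n : ℕ}
    (d : (Fin 2 → EuclideanSpace ℝ (Fin n)) → EuclideanSpace ℝ (Fin n))
    (z : Fin 2 → EuclideanSpace ℝ (Fin n)) : ℝ :=
  Real.sqrt (∑ i : Fin n, ∑ j : Fin 2, ∑ l : Fin n,
    (fderiv ℝ d z (Pi.single j (EuclideanSpace.single l 1)) i) ^ 2)

/-!
The Frobenius norm dominates the operator norm of each block of the Jacobian, so by the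
mean value theorem `d_k` is `C`-Lipschitz in each of its two arguments. Hence
`w_k = d_k(x_k, g_k) - d_k(x_k, 0)` satisfies `‖w_k‖ ≤ C ‖g_k‖`, and a rank-one operator
built from a norming functional of `g_k` maps `g_k` to `w_k` with norm at most `C`
(and `C ≤ √n C` unless `n = 0`, where every operator vanishes). The remainder
`b_k = d_k(x_k, 0)` is within `C ‖x_k - x_*‖` of `d_k(x_*, 0)`, so it tends to `0`.
-/

open Filter

theorem ContinuousLinearMap.opNorm_le_sqrt_sum_norm_apply_single_sq {ι F : Type*}
    [Fintype ι] [DecidableEq ι] [NormedAddCommGroup F] [NormedSpace ℝ F]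
    (T : EuclideanSpace ℝ ι →L[ℝ] F) :
    ‖T‖ ≤ √(∑ l, ‖T (EuclideanSpace.single l 1)‖ ^ 2) := by
  refine T.opNorm_le_bound (Real.sqrt_nonneg _) fun u => ?_
  calc ‖T u‖ = ‖∑ l, u l • T (EuclideanSpace.single l 1)‖ := by
        conv_lhs => rw [← (EuclideanSpace.basisFun ι ℝ).sum_repr u]
        simp
    _ ≤ ∑ l, ‖u l‖ * ‖T (EuclideanSpace.single l 1)‖ :=
        (norm_sum_le _ _).trans_eq (by simp only [norm_smul])
    _ ≤ √(∑ l, ‖u l‖ ^ 2) * √(∑ l, ‖T (EuclideanSpace.single l 1)‖ ^ 2) :=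
        Real.sum_mul_le_sqrt_mul_sqrt _ _ _
    _ = _ := by rw [EuclideanSpace.norm_eq, mul_comm]

theorem exists_continuousLinearMap_apply_eq_of_norm_le {E F : Type*}
    [NormedAddCommGroup E] [NormedSpace ℝ E] [NormedAddCommGroup F] [NormedSpace ℝ F]
    {g : E} {w : F} {C : ℝ} (hC : 0 ≤ C) (hw : ‖w‖ ≤ C * ‖g‖) :
    ∃ P : E →L[ℝ] F, P g = w ∧ ‖P‖ ≤ C := by
  rcases eq_or_ne g 0 with rfl | hg
  · exact ⟨0, (by simpa using hw : w = 0).symm, by simpa using hC⟩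
  obtain ⟨φ, hφ, hφg⟩ := exists_dual_vector'' ℝ g
  have hg' : 0 < ‖g‖ := norm_pos_iff.2 hg
  refine ⟨(‖g‖⁻¹ • φ).smulRight w, ?_, ?_⟩
  · simp [hφg, hg'.ne']
  · rw [ContinuousLinearMap.norm_smulRight_apply, norm_smul, norm_inv, norm_norm]
    calc ‖g‖⁻¹ * ‖φ‖ * ‖w‖ ≤ ‖g‖⁻¹ * 1 * (C * ‖g‖) := by gcongr
      _ = C := by field_simp

section
variable {n : ℕ}

theorem norm_fderiv_comp_single_le_jacFrobNorm2
    (d : (Fin 2 → EuclideanSpace ℝ (Fin n)) → EuclideanSpace ℝ (Fin n))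
    (z : Fin 2 → EuclideanSpace ℝ (Fin n)) (j : Fin 2) :
    ‖(fderiv ℝ d z).comp (.pi (Pi.single j (.id ℝ _)))‖ ≤ jacFrobNorm2 d z := by
  refine (ContinuousLinearMap.opNorm_le_sqrt_sum_norm_apply_single_sq _).trans
    (Real.sqrt_le_sqrt ?_)
  have hsingle : ∀ u : EuclideanSpace ℝ (Fin n),
      ContinuousLinearMap.pi (Pi.single j (.id ℝ _)) u =
        (Pi.single j u : Fin 2 → EuclideanSpace ℝ (Fin n)) := by
    intro u; ext1 i; rcases eq_or_ne i j with rfl | h <;> simp [*]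
  simp only [ContinuousLinearMap.comp_apply, hsingle, EuclideanSpace.norm_sq_eq,
    Real.norm_eq_abs, sq_abs]
  rw [Finset.sum_comm]
  gcongr with i
  exact Finset.single_le_sum
    (f := fun j' => ∑ l, (fderiv ℝ d z (Pi.single j' (EuclideanSpace.single l 1)) i) ^ 2)
    (fun _ _ => by positivity) (Finset.mem_univ j)

theorem norm_sub_update_le_of_jacFrobNorm2_le {C : ℝ}
    {d : (Fin 2 → EuclideanSpace ℝ (Fin n)) → EuclideanSpace ℝ (Fin n)}
    (hd : Differentiable ℝ d) (hC : ∀ z, jacFrobNorm2 d z ≤ C)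
    (z : Fin 2 → EuclideanSpace ℝ (Fin n)) (j : Fin 2) (y : EuclideanSpace ℝ (Fin n)) :
    ‖d (Function.update z j y) - d z‖ ≤ C * ‖y - z j‖ := by
  have hφ : ∀ y', HasFDerivAt (fun y => d (Function.update z j y))
      ((fderiv ℝ d (Function.update z j y')).comp (.pi (Pi.single j (.id ℝ _)))) y' :=
    fun y' => (hd _).hasFDerivAt.comp y' (hasFDerivAt_update z y')
  simpa using convex_univ.norm_image_sub_le_of_norm_hasFDerivWithin_le
    (fun y' _ => (hφ y').hasFDerivWithinAt)
    (fun y' _ => (norm_fderiv_comp_single_le_jacFrobNorm2 d _ j).trans (hC _))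
    (Set.mem_univ (z j)) (Set.mem_univ y)

end

theorem stmt2_general {n : ℕ} (C : ℝ) (L : NNReal) (f : EuclideanSpace ℝ (Fin n) → ℝ)
    (d : ℕ → (Fin 2 → EuclideanSpace ℝ (Fin n)) → EuclideanSpace ℝ (Fin n))
    (hddiff : ∀ k, Differentiable ℝ (d k))
    (hdC : ∀ k z, jacFrobNorm2 (d k) z ≤ C)
    (x : ℕ → EuclideanSpace ℝ (Fin n))
    (xs : EuclideanSpace ℝ (Fin n))
    (hconv : Filter.Tendsto x Filter.atTop (𝓝 xs))
    (hfp : Filter.Tendsto (fun k => d k ![xs, 0]) Filter.atTop (𝓝 0)) :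
    ∃ (P : ℕ → (EuclideanSpace ℝ (Fin n) →L[ℝ] EuclideanSpace ℝ (Fin n)))
      (b : ℕ → EuclideanSpace ℝ (Fin n)),
      (∀ k, d k ![x k, gradient f (x k)] = P k (gradient f (x k)) + b k) ∧
      (∀ k, ‖P k‖ ≤ Real.sqrt n * C) ∧
      Filter.Tendsto b Filter.atTop (𝓝 0) := by
  have hC : 0 ≤ C := (Real.sqrt_nonneg _).trans (hdC 0 0)
  have hgrad : ∀ k a g, ‖d k ![a, g] - d k ![a, 0]‖ ≤ C * ‖g‖ := fun k a g => by
    have hupd : Function.update ![a, 0] 1 g = ![a, g] := by ext1 i; fin_cases i <;> simp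
    simpa [hupd] using norm_sub_update_le_of_jacFrobNorm2_le (hddiff k) (hdC k) ![a, 0] 1 g
  have hstate : ∀ k y, ‖d k ![y, 0] - d k ![xs, 0]‖ ≤ C * ‖y - xs‖ := fun k y => by
    have hupd : Function.update ![xs, 0] 0 y = ![y, 0] := by ext1 i; fin_cases i <;> simp
    simpa [hupd] using norm_sub_update_le_of_jacFrobNorm2_le (hddiff k) (hdC k) ![xs, 0] 0 y
  choose P hPg hPC using fun k =>
    exists_continuousLinearMap_apply_eq_of_norm_le hC (hgrad k (x k) (gradient f (x k)))
  refine ⟨P, fun k => d k ![x k, 0], fun k => by rw [hPg]; abel, fun k => ?_, ?_⟩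
  · rcases Nat.eq_zero_or_pos n with rfl | hn
    · simp [Subsingleton.elim (P k) 0]
    · exact (hPC k).trans
        (le_mul_of_one_le_left hC (Real.one_le_sqrt.2 (by exact_mod_cast hn)))
  · have hb : Tendsto (fun k => d k ![x k, 0] - d k ![xs, 0]) atTop (𝓝 0) :=
      squeeze_zero_norm (fun k => hstate k (x k))
        (by simpa using ((tendsto_sub_nhds_zero_iff.2 hconv).norm.const_mul C))
    simpa using hb.add hfp

/-- Theorem 2.4: structure of good update rules in the
smooth case. -/
theorem stmt2 {n : ℕ} (C : ℝ) (L : NNReal) (f : EuclideanSpace ℝ (Fin n) → ℝ)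
    (hfconv : ConvexOn ℝ Set.univ f)
    (hfdiff : Differentiable ℝ f)
    (hflip : LipschitzWith L (gradient f))
    (d : ℕ → (Fin 2 → EuclideanSpace ℝ (Fin n)) → EuclideanSpace ℝ (Fin n))
    (hddiff : ∀ k, Differentiable ℝ (d k))
    (hdC : ∀ k z, jacFrobNorm2 (d k) z ≤ C)
    (x : ℕ → EuclideanSpace ℝ (Fin n))
    (hx : ∀ k, x (k + 1) = x k - d k ![x k, gradient f (x k)])
    (xs : EuclideanSpace ℝ (Fin n))
    (hmin : ∀ y, f xs ≤ f y)
    (hconv : Filter.Tendsto x Filter.atTop (𝓝 xs))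
    (hfp : Filter.Tendsto (fun k => d k ![xs, 0]) Filter.atTop (𝓝 0)) :
    ∃ (P : ℕ → (EuclideanSpace ℝ (Fin n) →L[ℝ] EuclideanSpace ℝ (Fin n)))
      (b : ℕ → EuclideanSpace ℝ (Fin n)),
      (∀ k, d k ![x k, gradient f (x k)] = P k (gradient f (x k)) + b k) ∧
      (∀ k, ‖P k‖ ≤ Real.sqrt n * C) ∧
      Filter.Tendsto b Filter.atTop (𝓝 0) :=
  stmt2_general C L f d hddiff hdC x xs hconv hfp
end

section
/- Consider the 1-D function r(x) = |x| and operators d_k : ℝ² → ℝ that are differentiable with gradient norm bounded by C. If the iteration x_{k+1} = x_k − d_k(x_k, g_k) with g_k ∈ ∂r(x_k) satisfies d_k(0,0) → 0 and x_k → 0 uniformly over all initial points x_0 ∈ [−1,1], then there exist scalars p_k, b_k with d_k(x_k, g_k) = p_k g_k + b_k, |p_k| ≤ C, b_k → 0, and p_k → 0 as k → ∞. -/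
open scoped Topology

/-- The subdifferential of a convex function `r : ℝ → ℝ` at `x`. -/
def subdiff1 (r : ℝ → ℝ) (x : ℝ) : Set ℝ :=
  {g | ∀ y, g * (y - x) ≤ r y - r x}

/-- A sequence `(x, g)` is generated by the explicit subgradient-type rule
`x_{k+1} = x_k − d_k(x_k, g_k)`, `g_k ∈ ∂|·|(x_k)`, from an initial point in
`[−1,1]`. -/
def Generated (d : ℕ → ℝ × ℝ → ℝ) (x g : ℕ → ℝ) : Prop :=
  x 0 ∈ Set.Icc (-1 : ℝ) 1 ∧
  (∀ k, g k ∈ subdiff1 (fun t => |t|) (x k)) ∧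
  (∀ k, x (k + 1) = x k - d k (x k, g k))

private lemma lip_aux (C : ℝ) (f : ℝ × ℝ → ℝ) (hf : Differentiable ℝ f)
    (hC : ∀ z, ‖fderiv ℝ f z‖ ≤ C) (a b : ℝ × ℝ) :
    |f a - f b| ≤ C * ‖a - b‖ := by
  have := Convex.norm_image_sub_le_of_norm_fderiv_le
    (f := f) (C := C) (s := Set.univ)
    (fun z _ => (hf z)) (fun z _ => hC z) convex_univ
    (Set.mem_univ b) (Set.mem_univ a)
  simpa [Real.norm_eq_abs] using this

/-- Proposition B.1: explicit subgradient-type rules on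
`r(x) = |x|` must reduce to subgradient descent with diminishing step sizes. -/
theorem stmt11 (C : ℝ) (d : ℕ → ℝ × ℝ → ℝ)
    (hd : ∀ k, Differentiable ℝ (d k))
    (hdC : ∀ k z, ‖fderiv ℝ (d k) z‖ ≤ C)
    (hfp : Filter.Tendsto (fun k => d k (0, 0)) Filter.atTop (𝓝 0))
    (hunif : ∀ ε > 0, ∃ N : ℕ, ∀ x g : ℕ → ℝ, Generated d x g →
      ∀ k ≥ N, |x k| ≤ ε) :
    ∀ x g : ℕ → ℝ, Generated d x g →
      ∃ p b : ℕ → ℝ,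
        (∀ k, d k (x k, g k) = p k * g k + b k) ∧
        (∀ k, |p k| ≤ C) ∧
        Filter.Tendsto b Filter.atTop (𝓝 0) ∧
        Filter.Tendsto p Filter.atTop (𝓝 0) := by
  intro x g hgen
  obtain ⟨hx0, hg, hrec⟩ := hgen
  have hC0 : 0 ≤ C := le_trans (norm_nonneg _) (hdC 0 0)
  -- g k * x k = |x k|
  have hgx : ∀ k, g k * x k = |x k| := by
    intro k
    have h1 : |x k| ≤ g k * x k := by
      have h0 := hg k 0
      simp only [zero_sub, abs_zero, mul_neg] at h0
      linarith
    have h2' : g k * x k ≤ |x k| := by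
      have h2 := hg k (2 * x k)
      simp only at h2
      have habs : |2 * x k| = 2 * |x k| := by rw [abs_mul]; norm_num
      rw [habs] at h2
      nlinarith
    linarith
  have hgsq : ∀ k, x k ≠ 0 → g k * g k = 1 := by
    intro k hk
    have h := hgx k
    rcases lt_or_gt_of_ne hk with h' | h'
    · have : g k = -1 := by
        have : |x k| = -(x k) := abs_of_neg h'
        field_simp at h ⊢; nlinarith
      rw [this]; ring
    · have : g k = 1 := by
        have : |x k| = x k := abs_of_pos h'
        nlinarith
      rw [this]; ring
  -- x k → 0
  have hx : Filter.Tendsto x Filter.atTop (𝓝 0) := by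
    rw [NormedAddCommGroup.tendsto_atTop]
    intro ε hε
    obtain ⟨N, hN⟩ := hunif (ε / 2) (by linarith)
    exact ⟨N, fun k hk => by
      have := hN x g ⟨hx0, hg, hrec⟩ k hk
      rw [Real.norm_eq_abs]; simpa using lt_of_le_of_lt this (by linarith)⟩
  have hx1 : Filter.Tendsto (fun k => x (k + 1)) Filter.atTop (𝓝 0) :=
    hx.comp (Filter.tendsto_add_atTop_nat 1)
  -- key Lipschitz estimates
  have lip := fun k => lip_aux C (d k) (hd k) (hdC k)
  have habs : Filter.Tendsto (fun k => |x k|) Filter.atTop (𝓝 0) := by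
    simpa using hx.abs
  have habs1 : Filter.Tendsto (fun k => |x (k + 1)|) Filter.atTop (𝓝 0) := by
    simpa using hx1.abs
  have habsd : Filter.Tendsto (fun k => |d k (0, 0)|) Filter.atTop (𝓝 0) := by
    simpa using hfp.abs
  have hd0 : ∀ k, |d k (x k, 0)| ≤ C * |x k| + |d k (0, 0)| := by
    intro k
    have h := lip k (x k, 0) (0, 0)
    have hn : ‖((x k, 0) : ℝ × ℝ) - (0, 0)‖ = |x k| := by
      simp [Prod.norm_def, Real.norm_eq_abs]
    rw [hn] at h
    calc |d k (x k, 0)| ≤ |d k (x k, 0) - d k (0, 0)| + |d k (0, 0)| := by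
          have := abs_sub_abs_le_abs_sub (d k (x k, 0)) (d k (0, 0)); 
          have := abs_add_le (d k (x k, 0) - d k (0, 0)) (d k (0, 0));
          simpa using this
      _ ≤ C * |x k| + |d k (0, 0)| := by linarith
  have hdg : ∀ k, |d k (x k, g k) - d k (x k, 0)| ≤ C * |g k| := by
    intro k
    have h := lip k (x k, g k) (x k, 0)
    have hn : ‖((x k, g k) : ℝ × ℝ) - (x k, 0)‖ = |g k| := by
      simp [Prod.norm_def, Real.norm_eq_abs]
    rwa [hn] at h
  -- d k (x k, g k) = x k - x (k+1)
  have hdval : ∀ k, d k (x k, g k) = x k - x (k + 1) := by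
    intro k; have := hrec k; linarith
  -- define p and b
  refine ⟨fun k => if x k = 0 then 0 else (d k (x k, g k) - d k (x k, 0)) * g k,
    fun k => d k (x k, g k) -
      (if x k = 0 then 0 else (d k (x k, g k) - d k (x k, 0)) * g k) * g k,
    fun k => by ring, ?_, ?_, ?_⟩
  · -- |p k| ≤ C
    intro k
    by_cases h : x k = 0
    · simp [h, hC0]
    · simp only [h, if_neg, if_false]
      rw [abs_mul]
      calc |d k (x k, g k) - d k (x k, 0)| * |g k| ≤ (C * |g k|) * |g k| :=
            mul_le_mul_of_nonneg_right (hdg k) (abs_nonneg _)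
        _ = C * (g k * g k) := by rw [mul_assoc, abs_mul_abs_self]
        _ = C := by rw [hgsq k h, mul_one]
  · -- b → 0
    apply squeeze_zero_norm (a := fun k => |x (k + 1)| + (C * |x k| + |d k (0, 0)|))
    · intro k
      rw [Real.norm_eq_abs]
      by_cases h : x k = 0
      · rw [if_pos h, zero_mul, sub_zero, hdval k, h, zero_sub, abs_neg]
        have h1 : (0:ℝ) ≤ C * |(0:ℝ)| + |d k (0, 0)| := by positivity
        linarith
      · simp only [h, if_neg, if_false]
        have hb : d k (x k, g k) - (d k (x k, g k) - d k (x k, 0)) * g k * g k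
            = d k (x k, 0) := by
          rw [mul_assoc, hgsq k h, mul_one]; ring
        rw [hb]
        have := hd0 k
        linarith [abs_nonneg (x (k + 1))]
    · have h2 : Filter.Tendsto (fun k => |x (k + 1)| + (C * |x k| + |d k (0, 0)|))
          Filter.atTop (𝓝 (0 + (C * 0 + 0))) :=
        habs1.add ((tendsto_const_nhds.mul habs).add habsd)
      simpa using h2
  · -- p → 0
    apply squeeze_zero_norm
      (a := fun k => (1 + C) * |x k| + |x (k + 1)| + |d k (0, 0)|)
    · intro k
      rw [Real.norm_eq_abs]
      by_cases h : x k = 0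
      · simp only [h, if_pos, if_true, abs_zero]
        positivity
      · simp only [h, if_neg, if_false]
        rw [abs_mul]
        have hg1 : |g k| = 1 := by
          nlinarith [hgsq k h, abs_nonneg (g k), sq_abs (g k)]
        rw [hg1, mul_one]
        have h1 : |d k (x k, g k)| ≤ |x k| + |x (k + 1)| := by
          rw [hdval k]; exact (abs_sub (x k) (x (k+1)))
        have h2 := hd0 k
        calc |d k (x k, g k) - d k (x k, 0)|
            ≤ |d k (x k, g k)| + |d k (x k, 0)| := abs_sub _ _
          _ ≤ (|x k| + |x (k + 1)|) + (C * |x k| + |d k (0, 0)|) := by linarith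
          _ = (1 + C) * |x k| + |x (k + 1)| + |d k (0, 0)| := by ring
    · have h2 : Filter.Tendsto
          (fun k => (1 + C) * |x k| + |x (k + 1)| + |d k (0, 0)|)
          Filter.atTop (𝓝 ((1 + C) * 0 + 0 + 0)) :=
        ((tendsto_const_nhds.mul habs).add habs1).add habsd
      simpa using h2
end
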